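/- arXiv:1801.09203 — 2 statements merged into one kernel-verified Lean document; each statement's English description precedes it below -/
import Mathlib

section
/- Let F be the involutive monoid morphism on words over {a,b,α,β} defined by F(a)=α, F(α)=a, F(b)=β, F(β)=b. If z and p are nonempty words satisfying zp = pF(z), then there exists a nonempty word x and natural numbers i, j such that z = (F(x)x)^i and p = (F(x)x)^j F(x). -/
inductive Letter | a | b | α | β

/-- The letter involution a ↔ α, b ↔ β. -/
def swapL : Letter → Letter
  | Letter.a => Letter.α
  | Letter.α => Letter.a
  | Letter.b => Letter.β
  | Letter.β => Letter.b

/-- The involutive monoid morphism F extended letterwise to words. -/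
def F : FreeMonoid Letter →* FreeMonoid Letter := FreeMonoid.map swapL

/-!
The argument works for any fixed-point-free involution `σ` of the alphabet, by Euclid's algorithm
on the lengths. If `|z| < |p|` then `p = z q` and `z q = q σ(z)`. If `|z| > |p|`
then `z = p s` and `σ(z) = s p`, so `s p = σ(p) σ(s)`; cutting this equation at the shorter of
`s` and `σ(p)` gives either `σ(p) = s t` with `t σ(s) = σ(s) σ(t)`, or `s = σ(p) u` with
`u p = p σ(u)`. In every case we get a shorter solution, and the shape `z = (σ(x) x)^i`,
`p = (σ(x) x)^j σ(x)` is preserved when going back up. The case `|z| = |p|` forces `z = σ(z)`,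
impossible for a nonempty word since `σ` has no fixed letter.
-/

namespace FreeMonoid

variable {α β : Type*} {σ : α → α}

theorem mul_eq_mul_cases {a b c d : FreeMonoid α} (h : a * b = c * d) :
    (∃ q, c = a * q ∧ b = q * d) ∨ (∃ q, a = c * q ∧ d = q * b) := by
  rcases List.append_eq_append_iff.mp h with ⟨q, hc, hb⟩ | ⟨q, ha, hd⟩
  · exact .inl ⟨ofList q, hc, hb⟩
  · exact .inr ⟨ofList q, ha, hd⟩

theorem length_map (f : α → β) (w : FreeMonoid α) : (map f w).length = w.length :=
  List.length_map _

theorem map_ne_one (f : α → β) {w : FreeMonoid α} (hw : w ≠ 1) : map f w ≠ 1 := by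
  rwa [Ne, ← length_eq_zero, length_map, length_eq_zero]

theorem map_map_of_involutive (hσ : Function.Involutive σ) (w : FreeMonoid α) :
    map σ (map σ w) = w := by
  rw [map_map, hσ.comp_self, map_id]
  rfl

theorem eq_one_of_map_eq_self (hσ : ∀ a, σ a ≠ a) {w : FreeMonoid α} (h : map σ w = w) :
    w = 1 := by
  have hl : (toList w).map σ = toList w := congrArg toList h
  cases hw : toList w with
  | nil => exact toList.injective hw
  | cons a _ =>
    rw [hw, List.map_cons, List.cons.injEq] at hl
    exact absurd hl.1 (hσ a)

/-- The shape of the solutions of `z p = p σ(z)`. -/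
def IsStandardSolution (σ : α → α) (z p : FreeMonoid α) : Prop :=
  ∃ x ≠ 1, ∃ i j : ℕ, z = (map σ x * x) ^ i ∧ p = (map σ x * x) ^ j * map σ x

theorem map_pow_mul_map (hσ : Function.Involutive σ) (x : FreeMonoid α) (j : ℕ) :
    map σ ((map σ x * x) ^ j * map σ x) = x * (map σ x * x) ^ j := by
  rw [map_mul, map_pow, map_mul, map_map_of_involutive hσ, mul_pow_mul]

theorem isStandardSolution_one_left (hσ : Function.Involutive σ) {p : FreeMonoid α}
    (hp : p ≠ 1) : IsStandardSolution σ 1 p := by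
  refine ⟨map σ p, ?_, 0, 0, (pow_zero _).symm, ?_⟩
  · exact map_ne_one σ hp
  · rw [pow_zero, one_mul, map_map_of_involutive hσ]

namespace IsStandardSolution

variable {z p : FreeMonoid α}

theorem mul_left (h : IsStandardSolution σ z p) : IsStandardSolution σ z (z * p) := by
  obtain ⟨x, hx, i, j, rfl, rfl⟩ := h
  exact ⟨x, hx, i, i + j, rfl, by rw [pow_add, mul_assoc]⟩

theorem mul_mul_map (hσ : Function.Involutive σ) (h : IsStandardSolution σ z p) :
    IsStandardSolution σ (z * p * map σ p) (z * p) := by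
  obtain ⟨x, hx, i, j, rfl, rfl⟩ := h
  refine ⟨x, hx, i + j + 1 + j, i + j, ?_, by rw [pow_add, mul_assoc]⟩
  rw [map_pow_mul_map hσ]
  simp only [pow_add, pow_one, mul_assoc]

theorem mul_map_mul (hσ : Function.Involutive σ) (h : IsStandardSolution σ z p) :
    IsStandardSolution σ (p * map σ p * z) p := by
  obtain ⟨x, hx, i, j, rfl, rfl⟩ := h
  refine ⟨x, hx, j + 1 + j + i, j, ?_, rfl⟩
  rw [map_pow_mul_map hσ]
  simp only [pow_add, pow_one, mul_assoc]

end IsStandardSolution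

theorem isStandardSolution_of_mul_eq_mul_map (hσ : Function.Involutive σ) (hfix : ∀ a, σ a ≠ a)
    {z p : FreeMonoid α} (hp : p ≠ 1) (h : z * p = p * map σ z) : IsStandardSolution σ z p := by
  induction hn : z.length + p.length using Nat.strong_induction_on generalizing z p with
  | _ n ih =>
  subst hn
  have hp₀ : p.length ≠ 0 := by rwa [Ne, length_eq_zero]
  rcases mul_eq_mul_cases h with ⟨q, rfl, hq⟩ | ⟨s, rfl, hs⟩
  · rcases eq_or_ne z 1 with rfl | hz
    · exact isStandardSolution_one_left hσ hp
    have hq₁ : q ≠ 1 := by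
      rintro rfl
      exact hz (eq_one_of_map_eq_self hfix (by simpa using hq.symm))
    have hz₀ : z.length ≠ 0 := by rwa [Ne, length_eq_zero]
    refine IsStandardSolution.mul_left (ih _ ?_ hq₁ hq rfl)
    simp only [length_mul]; omega
  have hs₁ : s ≠ 1 := by
    rintro rfl
    exact hp (eq_one_of_map_eq_self hfix (by simpa using hs))
  rw [map_mul] at hs
  rcases mul_eq_mul_cases hs.symm with ⟨t, ht, rfl⟩ | ⟨u, rfl, hu⟩
  · have hst : t * map σ s = map σ s * map σ t := by
      simpa only [map_mul, map_map_of_involutive hσ] using congrArg (map σ) ht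
    have key := (ih _ ?_ (map_ne_one σ hs₁) hst rfl).mul_mul_map hσ
    · rwa [map_map_of_involutive hσ] at key
    simp only [length_mul, length_map] at hp₀ ⊢; omega
  · have hup : u * p = p * map σ u := by
      rw [← hu, map_mul, map_map_of_involutive hσ]
    rw [← mul_assoc]
    refine (ih _ ?_ hp hup rfl).mul_map_mul hσ
    simp only [length_mul, length_map]; omega

end FreeMonoid

theorem swapL_involutive : Function.Involutive swapL := fun l => by cases l <;> rfl

theorem swapL_ne_self (l : Letter) : swapL l ≠ l := by cases l <;> nofun

theorem word_equation_F_two_general (z p : FreeMonoid Letter) (hp : p ≠ 1)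
    (h : z * p = p * F z) :
    ∃ x : FreeMonoid Letter, x ≠ 1 ∧ ∃ i j : ℕ,
      z = (F x * x) ^ i ∧ p = (F x * x) ^ j * F x :=
  FreeMonoid.isStandardSolution_of_mul_eq_mul_map swapL_involutive swapL_ne_self hp h

/-- Solutions of the word equation z p = p F(z). -/
theorem word_equation_F_two (z p : FreeMonoid Letter) (hz : z ≠ 1) (hp : p ≠ 1)
    (h : z * p = p * F z) :
    ∃ x : FreeMonoid Letter, x ≠ 1 ∧ ∃ i j : ℕ,
      z = (F x * x) ^ i ∧ p = (F x * x) ^ j * F x :=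
  word_equation_F_two_general z p hp h
end

section
/- For every natural number k, the compositions of elementary Sturmian morphisms satisfy φ_a ∘ φ_α^k ∘ φ_b = φ_b ∘ φ_β^k ∘ φ_a as morphisms on binary words. -/
/-- φ_a : 0 ↦ 0, 1 ↦ 10. -/
def φa : Monoid.End (FreeMonoid Bool) :=
  FreeMonoid.lift fun x => if x then FreeMonoid.of true * FreeMonoid.of false else FreeMonoid.of false

/-- φ_b : 0 ↦ 0, 1 ↦ 01. -/
def φb : Monoid.End (FreeMonoid Bool) :=
  FreeMonoid.lift fun x => if x then FreeMonoid.of false * FreeMonoid.of true else FreeMonoid.of false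

/-- φ_α : 0 ↦ 01, 1 ↦ 1. -/
def φα : Monoid.End (FreeMonoid Bool) :=
  FreeMonoid.lift fun x => if x then FreeMonoid.of true else FreeMonoid.of false * FreeMonoid.of true

/-- φ_β : 0 ↦ 10, 1 ↦ 1. -/
def φβ : Monoid.End (FreeMonoid Bool) :=
  FreeMonoid.lift fun x => if x then FreeMonoid.of true else FreeMonoid.of true * FreeMonoid.of false

/-- The exchange morphism E : 0 ↦ 1, 1 ↦ 0. -/
def Eend : Monoid.End (FreeMonoid Bool) := FreeMonoid.map not

/-!
Both sides are monoid endomorphisms of the free monoid, so it suffices to compare them on the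
letters. Since `φ_α` and `φ_β` fix `1`, `φ_α^k` sends `0` to `01^k` and `φ_β^k` sends `0` to
`1^k0`.
Hence both sides send `0` to `0(10)^k = (01)^k0` and `1` to `0(10)^(k+1) = (01)^(k+1)0`,
instances of `x (y x)^n = (x y)^n x`.
-/

namespace Monoid.End

variable {M : Type*} [Monoid M] {f : Monoid.End M} {x y : M}

lemma pow_apply_of_apply_eq (hy : f y = y) (k : ℕ) : (f ^ k) y = y :=
  Function.iterate_fixed hy k

lemma pow_apply_eq_mul_pow (hy : f y = y) (hx : f x = x * y) (k : ℕ) :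
    (f ^ k) x = x * y ^ k := by
  induction k with
  | zero => simp
  | succ k ih =>
    rw [pow_succ, coe_mul, Function.comp_apply, hx, map_mul, ih, pow_apply_of_apply_eq hy,
      pow_succ, mul_assoc]

lemma pow_apply_eq_pow_mul (hy : f y = y) (hx : f x = y * x) (k : ℕ) :
    (f ^ k) x = y ^ k * x := by
  induction k with
  | zero => simp
  | succ k ih =>
    rw [pow_succ, coe_mul, Function.comp_apply, hx, map_mul, ih, pow_apply_of_apply_eq hy,
      pow_succ', mul_assoc]

end Monoid.End

lemma φa_of_false : φa (.of false) = .of false := rfl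
lemma φa_of_true : φa (.of true) = .of true * .of false := rfl
lemma φb_of_false : φb (.of false) = .of false := rfl
lemma φb_of_true : φb (.of true) = .of false * .of true := rfl

open Monoid.End in
/-- φ_a ∘ φ_α^k ∘ φ_b = φ_b ∘ φ_β^k ∘ φ_a (multiplication in `Monoid.End` is composition). -/
theorem sturmian_relation_latin (k : ℕ) : φa * φα ^ k * φb = φb * φβ ^ k * φa := by
  have hα₀ : (φα ^ k) (.of false) = .of false * .of true ^ k := pow_apply_eq_mul_pow rfl rfl k
  have hα₁ : (φα ^ k) (.of true) = .of true := pow_apply_of_apply_eq rfl k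
  have hβ₀ : (φβ ^ k) (.of false) = .of true ^ k * .of false := pow_apply_eq_pow_mul rfl rfl k
  have hβ₁ : (φβ ^ k) (.of true) = .of true := pow_apply_of_apply_eq rfl k
  refine FreeMonoid.hom_eq fun b => ?_
  cases b
  · show φa ((φα ^ k) (.of false)) = φb ((φβ ^ k) (.of false))
    rw [hα₀, hβ₀]
    simp only [map_mul, map_pow, φa_of_false, φa_of_true, φb_of_false, φb_of_true]
    exact (mul_pow_mul _ _ k).symm
  · show φa ((φα ^ k) (.of false * .of true)) = φb ((φβ ^ k) (.of true * .of false))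
    rw [map_mul (φα ^ k), map_mul (φβ ^ k), hα₀, hα₁, hβ₀, hβ₁,
      mul_assoc, ← pow_succ, ← mul_assoc, ← pow_succ']
    simp only [map_mul, map_pow, φa_of_false, φa_of_true, φb_of_false, φb_of_true]
    exact (mul_pow_mul _ _ (k + 1)).symm
end
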